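/- Let {X_n : n ∈ (ℤ₊)^d} satisfy condition (MD): (1/|n|) ∑_{k ⪯ n} P(|X_k| > x) ≤ M P(|X| > x) for all x ≥ 0 and n. If E[|X| (log⁺|X|)^{d}] < ∞, then ∑_{n ∈ (ℤ₊)^d} |n|^{-2} ∑_{k ⪯ n} E[|X_k|·1{|X_k| > |n|}] < ∞. -/

import Mathlib

open MeasureTheory ENNReal

/-- `pidx n = n₁ ⋯ n_d` for `n ∈ (ℤ₊)^d`. -/
def pidx {d : ℕ} (n : Fin d → ℕ+) : ℕ := ∏ i, (n i : ℕ)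

lemma pidx_pos {d : ℕ} (n : Fin d → ℕ+) : 0 < pidx n :=
  Finset.prod_pos fun i _ => (n i).pos

def pe : ℕ ≃ ℕ+ :=
  ⟨Nat.succPNat, PNat.natPred, fun _ => rfl, fun m => PNat.succPNat_natPred m⟩

lemma tsum_pi_prod (g : ℕ+ → ℝ≥0∞) (d : ℕ) :
    ∑' n : Fin d → ℕ+, ∏ i, g (n i) = (∑' m : ℕ+, g m) ^ d := by
  induction d with
  | zero =>
    rw [pow_zero,
      tsum_eq_single (default : Fin 0 → ℕ+) (fun b hb => absurd (Subsingleton.elim b _) hb)]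
    simp
  | succ d ih =>
    rw [← (Fin.consEquiv (fun _ : Fin (d+1) => ℕ+)).tsum_eq]
    have h1 : ∀ p : ℕ+ × (Fin d → ℕ+),
        ∏ i, g ((Fin.consEquiv (fun _ : Fin (d+1) => ℕ+)) p i) = g p.1 * ∏ i, g (p.2 i) :=
      fun p => by
        simp only [Fin.consEquiv_apply, Fin.prod_univ_succ, Fin.cons_zero, Fin.cons_succ]
    simp_rw [h1]
    rw [ENNReal.tsum_prod (f := fun (a : ℕ+) (b : Fin d → ℕ+) => g a * ∏ i, g (b i))]
    simp_rw [ENNReal.tsum_mul_left]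
    rw [ENNReal.tsum_mul_right, ih, pow_succ, mul_comm]

lemma hsum_bound (a : ℝ) :
    ∑' m : ℕ+, (((m : ℕ) : ℝ≥0∞))⁻¹ * (if ((m : ℕ) : ℝ) < a then 1 else 0)
      ≤ ENNReal.ofReal (2 * max 1 (Real.log a)) := by
  by_cases ha : a ≤ 1
  · have h0 : ∀ m : ℕ+, (((m : ℕ) : ℝ≥0∞))⁻¹ * (if ((m : ℕ) : ℝ) < a then 1 else 0) = 0 := by
      intro m
      have : ¬ ((m : ℕ) : ℝ) < a := by
        push_neg
        calc a ≤ 1 := ha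
          _ ≤ ((m : ℕ) : ℝ) := by exact_mod_cast m.one_le
      simp [this]
    simp [h0]
  push_neg at ha
  have ha0 : (0:ℝ) ≤ a := by linarith
  -- reindex to ℕ
  rw [← pe.tsum_eq]
  have he : ∀ j : ℕ, ((pe j : ℕ+) : ℕ) = j + 1 := fun j => rfl
  set K := ⌊a⌋₊ with hKdef
  have hvanish : ∀ j ∉ Finset.range K,
      (((pe j : ℕ) : ℝ≥0∞))⁻¹ * (if ((pe j : ℕ) : ℝ) < a then 1 else 0) = 0 := by
    intro j hj
    rw [Finset.mem_range, not_lt] at hj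
    have : ¬ ((pe j : ℕ) : ℝ) < a := by
      push_neg
      rw [he]
      have : a < K + 1 := Nat.lt_floor_add_one a
      push_cast
      have : (K:ℝ) ≤ j := by exact_mod_cast hj
      linarith
    simp [this]
  rw [tsum_eq_sum hvanish]
  have hle : ∑ j ∈ Finset.range K, (((pe j : ℕ) : ℝ≥0∞))⁻¹ * (if ((pe j : ℕ) : ℝ) < a then 1 else 0)
      ≤ ∑ j ∈ Finset.range K, ENNReal.ofReal ((1:ℝ)/(j+1)) := by
    apply Finset.sum_le_sum
    intro j _
    rw [he]
    have h1 : (((j+1 : ℕ) : ℝ≥0∞))⁻¹ * (if (((j+1:ℕ)) : ℝ) < a then 1 else 0)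
        ≤ (((j+1 : ℕ) : ℝ≥0∞))⁻¹ := by
      split <;> simp
    refine h1.trans_eq ?_
    rw [← ENNReal.ofReal_natCast (j+1), ← ENNReal.ofReal_inv_of_pos (by positivity)]
    norm_num
  refine hle.trans ?_
  rw [← ENNReal.ofReal_sum_of_nonneg (fun j _ => by positivity)]
  apply ENNReal.ofReal_le_ofReal
  have hh : ∑ j ∈ Finset.range K, (1:ℝ)/(j+1) = (harmonic K : ℝ) := by
    rw [harmonic]
    push_cast
    apply Finset.sum_congr rfl
    intro j _
    norm_num
  rw [hh]
  have := harmonic_floor_le_one_add_log a (le_of_lt ha)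
  have hmax1 : (1:ℝ) ≤ max 1 (Real.log a) := le_max_left _ _
  have hmax2 : Real.log a ≤ max 1 (Real.log a) := le_max_right _ _
  linarith [this]

lemma key_bound (d : ℕ) (a : ℝ) :
    ∑' n : Fin d → ℕ+, ((pidx n : ℝ≥0∞))⁻¹ * (if ((pidx n : ℕ) : ℝ) < a then 1 else 0)
      ≤ ENNReal.ofReal ((2 * max 1 (Real.log a)) ^ d) := by
  set g : ℕ+ → ℝ≥0∞ := fun m => (((m : ℕ) : ℝ≥0∞))⁻¹ * (if ((m : ℕ) : ℝ) < a then 1 else 0)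
    with hg
  have step1 : ∀ n : Fin d → ℕ+,
      ((pidx n : ℝ≥0∞))⁻¹ * (if ((pidx n : ℕ) : ℝ) < a then 1 else 0) ≤ ∏ i, g (n i) := by
    intro n
    by_cases hc : ((pidx n : ℕ) : ℝ) < a
    · have hinv : ((pidx n : ℝ≥0∞))⁻¹ = ∏ i, (((n i : ℕ) : ℝ≥0∞))⁻¹ := by
        rw [show ((pidx n : ℕ) : ℝ≥0∞) = ∏ i, ((n i : ℕ) : ℝ≥0∞) by
          rw [pidx]; push_cast; ring, ENNReal.prod_inv_distrib]
        intro i _ j _ _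
        exact Or.inl (by exact_mod_cast (n i).pos.ne')
      have hcond : ∀ i, ((n i : ℕ) : ℝ) < a := by
        intro i
        have h1 : (n i : ℕ) ≤ pidx n :=
          Nat.le_of_dvd (pidx_pos n) (Finset.dvd_prod_of_mem _ (Finset.mem_univ i))
        calc ((n i : ℕ) : ℝ) ≤ ((pidx n : ℕ) : ℝ) := by exact_mod_cast h1
          _ < a := hc
      rw [if_pos hc, hinv, mul_one]
      apply le_of_eq
      exact Finset.prod_congr rfl (fun i _ => by simp [hg, if_pos (hcond i)])
    · simp [if_neg hc]
  calc ∑' n : Fin d → ℕ+, ((pidx n : ℝ≥0∞))⁻¹ * (if ((pidx n : ℕ) : ℝ) < a then 1 else 0)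
      ≤ ∑' n : Fin d → ℕ+, ∏ i, g (n i) := ENNReal.tsum_le_tsum step1
    _ = (∑' m : ℕ+, g m) ^ d := tsum_pi_prod g d
    _ ≤ (ENNReal.ofReal (2 * max 1 (Real.log a))) ^ d := pow_le_pow_left' (hsum_bound a) d
    _ = ENNReal.ofReal ((2 * max 1 (Real.log a)) ^ d) := by
        rw [ENNReal.ofReal_pow]
        positivity

lemma trunc_bound {Ω : Type*} [MeasurableSpace Ω] (P : Measure Ω) (f : Ω → ℝ)
    (hf : Measurable f) (N : ℕ) :
    ∫⁻ ω in {ω | (N : ℝ) < |f ω|}, ENNReal.ofReal |f ω| ∂P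
      ≤ (N : ℝ≥0∞) * P {ω | (N : ℝ) < |f ω|}
        + ∑' i : ℕ, P {ω | (N : ℝ) + i < |f ω|} := by
  have hS : ∀ c : ℝ, MeasurableSet {ω | c < |f ω|} := fun c =>
    measurableSet_lt measurable_const hf.abs
  have hpt : ∀ ω, ({ω | (N : ℝ) < |f ω|}.indicator (fun ω => ENNReal.ofReal |f ω|)) ω
      ≤ (N : ℝ≥0∞) * ({ω | (N : ℝ) < |f ω|}.indicator (1 : Ω → ℝ≥0∞)) ω
        + ∑' i : ℕ, ({ω | (N : ℝ) + i < |f ω|}.indicator (1 : Ω → ℝ≥0∞)) ω := by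
    intro ω
    by_cases hω : (N : ℝ) < |f ω|
    · rw [Set.indicator_of_mem (show ω ∈ {ω | (N:ℝ) < |f ω|} from hω),
        Set.indicator_of_mem (show ω ∈ {ω | (N:ℝ) < |f ω|} from hω), Pi.one_apply, mul_one]
      set a := |f ω| with ha
      set m := ⌈a - N⌉₊ with hm
      have h1 : ENNReal.ofReal a ≤ (N : ℝ≥0∞) + m := by
        rw [← ENNReal.ofReal_natCast N, ← ENNReal.ofReal_natCast m,
          ← ENNReal.ofReal_add (by positivity) (by positivity)]
        apply ENNReal.ofReal_le_ofReal
        have h2 : a - N ≤ (m : ℝ) := Nat.le_ceil _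
        linarith
      refine h1.trans (add_le_add_right ?_ _)
      calc (m : ℝ≥0∞) = ∑ _i ∈ Finset.range m, (1 : ℝ≥0∞) := by simp
        _ ≤ ∑ i ∈ Finset.range m, ({ω | (N : ℝ) + i < |f ω|}.indicator (1 : Ω → ℝ≥0∞)) ω := by
            apply Finset.sum_le_sum
            intro i hi
            rw [Finset.mem_range, hm, Nat.lt_ceil] at hi
            have : (N : ℝ) + i < a := by linarith
            rw [Set.indicator_of_mem (show ω ∈ {ω | (N:ℝ) + i < |f ω|} from this), Pi.one_apply]
        _ ≤ ∑' i : ℕ, ({ω | (N : ℝ) + i < |f ω|}.indicator (1 : Ω → ℝ≥0∞)) ω :=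
            ENNReal.sum_le_tsum _
    · rw [Set.indicator_of_notMem (show ω ∉ {ω | (N:ℝ) < |f ω|} from hω)]
      exact zero_le
  calc ∫⁻ ω in {ω | (N : ℝ) < |f ω|}, ENNReal.ofReal |f ω| ∂P
      = ∫⁻ ω, ({ω | (N : ℝ) < |f ω|}.indicator (fun ω => ENNReal.ofReal |f ω|)) ω ∂P := by
        rw [lintegral_indicator (hS N)]
    _ ≤ ∫⁻ ω, ((N : ℝ≥0∞) * ({ω | (N : ℝ) < |f ω|}.indicator (1 : Ω → ℝ≥0∞)) ω
          + ∑' i : ℕ, ({ω | (N : ℝ) + i < |f ω|}.indicator (1 : Ω → ℝ≥0∞)) ω) ∂P :=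
        lintegral_mono hpt
    _ = (N : ℝ≥0∞) * P {ω | (N : ℝ) < |f ω|} + ∑' i : ℕ, P {ω | (N : ℝ) + i < |f ω|} := by
        rw [lintegral_add_left (((measurable_one).indicator (hS N)).const_mul _),
          lintegral_const_mul _ ((measurable_one).indicator (hS N)),
          lintegral_indicator_one (hS N),
          lintegral_tsum (fun i => ((measurable_one).indicator (hS _)).aemeasurable)]
        congr 1
        exact tsum_congr fun i => lintegral_indicator_one (hS _)

lemma pt_bound {Ω : Type*} [MeasurableSpace Ω] (P : Measure Ω) (Y : Ω → ℝ)
    (hY : Measurable Y) (N : ℕ) :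
    (N : ℝ≥0∞) * P {ω | (N : ℝ) < |Y ω|}
      ≤ ∫⁻ ω, ({ω | (N : ℝ) < |Y ω|}.indicator fun ω => ENNReal.ofReal |Y ω|) ω ∂P := by
  have hS : MeasurableSet {ω | (N : ℝ) < |Y ω|} :=
    measurableSet_lt measurable_const hY.abs
  calc (N : ℝ≥0∞) * P {ω | (N : ℝ) < |Y ω|}
      = ∫⁻ ω, (N : ℝ≥0∞) * ({ω | (N : ℝ) < |Y ω|}.indicator (1 : Ω → ℝ≥0∞)) ω ∂P := by
        rw [lintegral_const_mul _ (measurable_one.indicator hS), lintegral_indicator_one hS]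
    _ ≤ _ := by
        apply lintegral_mono
        intro ω
        simp only []
        by_cases hω : (N : ℝ) < |Y ω|
        · rw [Set.indicator_of_mem (show ω ∈ {ω | (N:ℝ) < |Y ω|} from hω),
            Set.indicator_of_mem (show ω ∈ {ω | (N:ℝ) < |Y ω|} from hω), Pi.one_apply, mul_one,
            ← ENNReal.ofReal_natCast]
          exact ENNReal.ofReal_le_ofReal hω.le
        · rw [Set.indicator_of_notMem (show ω ∉ {ω | (N:ℝ) < |Y ω|} from hω),
            Set.indicator_of_notMem (show ω ∉ {ω | (N:ℝ) < |Y ω|} from hω), mul_zero]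

lemma tail_bound {Ω : Type*} [MeasurableSpace Ω] (P : Measure Ω) (Y : Ω → ℝ)
    (hY : Measurable Y) (N : ℕ) (hN : 1 ≤ N) :
    ∑' i : ℕ, P {ω | (N : ℝ) + i < |Y ω|}
      ≤ ∫⁻ ω, ({ω | (N : ℝ) < |Y ω|}.indicator fun ω => ENNReal.ofReal |Y ω|) ω ∂P := by
  have hS : ∀ c : ℝ, MeasurableSet {ω | c < |Y ω|} := fun c =>
    measurableSet_lt measurable_const hY.abs
  calc ∑' i : ℕ, P {ω | (N : ℝ) + i < |Y ω|}
      = ∫⁻ ω, ∑' i : ℕ, ({ω | (N : ℝ) + i < |Y ω|}.indicator (1 : Ω → ℝ≥0∞)) ω ∂P := by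
        rw [lintegral_tsum (fun i => (measurable_one.indicator (hS _)).aemeasurable)]
        exact tsum_congr fun i => (lintegral_indicator_one (hS _)).symm
    _ ≤ _ := by
        apply lintegral_mono
        intro ω
        simp only []
        set a := |Y ω| with ha
        by_cases hω : (N : ℝ) < a
        · rw [Set.indicator_of_mem (show ω ∈ {ω | (N:ℝ) < |Y ω|} from hω)]
          have hterm : ∀ i : ℕ, ({ω | (N : ℝ) + i < |Y ω|}.indicator (1 : Ω → ℝ≥0∞)) ω
              = if (N : ℝ) + i < a then 1 else 0 := fun i => Set.indicator_apply _ _ _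
          have h1 : ∀ i : ℕ, (if (N : ℝ) + i < a then (1:ℝ≥0∞) else 0)
              ≤ (if (i : ℝ) < a - 1 then (1:ℝ≥0∞) else 0) := by
            intro i
            split
            · rename_i h
              have h1N : (1:ℝ) ≤ N := by exact_mod_cast hN
              rw [if_pos (by linarith)]
            · simp
          calc ∑' i : ℕ, ({ω | (N : ℝ) + i < |Y ω|}.indicator (1 : Ω → ℝ≥0∞)) ω
              ≤ ∑' i : ℕ, (if (i : ℝ) < a - 1 then (1:ℝ≥0∞) else 0) := by
                apply ENNReal.tsum_le_tsum
                intro i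
                rw [hterm i]
                exact h1 i
            _ = ∑ i ∈ Finset.range ⌈a - 1⌉₊, (if (i : ℝ) < a - 1 then (1:ℝ≥0∞) else 0) := by
                apply tsum_eq_sum
                intro i hi
                rw [Finset.mem_range] at hi
                rw [if_neg]
                rw [← Nat.lt_ceil]
                exact hi
            _ ≤ ∑ _i ∈ Finset.range ⌈a - 1⌉₊, (1:ℝ≥0∞) := by
                apply Finset.sum_le_sum
                intro i _
                split <;> simp
            _ = (⌈a - 1⌉₊ : ℝ≥0∞) := by simp
            _ ≤ ENNReal.ofReal a := by
                rw [← ENNReal.ofReal_natCast]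
                apply ENNReal.ofReal_le_ofReal
                have h1N : (1:ℝ) ≤ N := by exact_mod_cast hN
                have := Nat.ceil_lt_add_one (show (0:ℝ) ≤ a - 1 by linarith)
                linarith
        · rw [Set.indicator_of_notMem (show ω ∉ {ω | (N:ℝ) < |Y ω|} from hω)]
          have : ∀ i : ℕ, ({ω | (N : ℝ) + i < |Y ω|}.indicator (1 : Ω → ℝ≥0∞)) ω = 0 := by
            intro i
            apply Set.indicator_of_notMem
            show ¬ ((N : ℝ) + i < |Y ω|)
            push_neg at hω ⊢
            have : (0:ℝ) ≤ i := i.cast_nonneg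
            rw [← ha]
            linarith
          rw [tsum_congr this, tsum_zero]

theorem stmt10 {Ω : Type*} [MeasurableSpace Ω] (P : Measure Ω) [IsProbabilityMeasure P]
    {d : ℕ} (hd : 1 ≤ d)
    (X : (Fin d → ℕ+) → Ω → ℝ) (Y : Ω → ℝ)
    (hX : ∀ k, Measurable (X k)) (hY : Measurable Y)
    (M : ℝ) (hM : 0 ≤ M)
    (hMD : ∀ x : ℝ, 0 ≤ x → ∀ n : Fin d → ℕ+,
      ∑ k ∈ Finset.Icc 1 n, P {ω : Ω | x < |X k ω|}
        ≤ (pidx n : ℝ≥0∞) * ENNReal.ofReal M * P {ω : Ω | x < |Y ω|})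
    (hmom : ∫⁻ ω, ENNReal.ofReal (|Y ω| * (max 1 (Real.log |Y ω|)) ^ d) ∂P < ∞) :
    ∑' n : Fin d → ℕ+,
      ENNReal.ofReal ((pidx n : ℝ) ^ (-2 : ℝ)) *
        ∑ k ∈ Finset.Icc 1 n,
          ∫⁻ ω in {ω : Ω | (pidx n : ℝ) < |X k ω|},
            ENNReal.ofReal |X k ω| ∂P < ∞ := by
  classical
  set M' := ENNReal.ofReal M with hM'
  have hYm : Measurable fun ω => ENNReal.ofReal |Y ω| :=
    ENNReal.measurable_ofReal.comp hY.abs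
  have hSY : ∀ c : ℝ, MeasurableSet {ω | c < |Y ω|} := fun c =>
    measurableSet_lt measurable_const hY.abs
  set T : ℕ → ℝ≥0∞ := fun N =>
    ∫⁻ ω, ({ω | (N : ℝ) < |Y ω|}.indicator fun ω => ENNReal.ofReal |Y ω|) ω ∂P with hT
  -- per-n bound
  have step1 : ∀ n : Fin d → ℕ+,
      ENNReal.ofReal ((pidx n : ℝ) ^ (-2 : ℝ)) *
        ∑ k ∈ Finset.Icc 1 n,
          ∫⁻ ω in {ω : Ω | (pidx n : ℝ) < |X k ω|}, ENNReal.ofReal |X k ω| ∂P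
      ≤ 2 * M' * (((pidx n : ℕ) : ℝ≥0∞)⁻¹ * T (pidx n)) := by
    intro n
    have hN1 : 1 ≤ pidx n := pidx_pos n
    have hNne : ((pidx n : ℕ) : ℝ≥0∞) ≠ 0 := by exact_mod_cast (pidx_pos n).ne'
    have hNtop : ((pidx n : ℕ) : ℝ≥0∞) ≠ ∞ := ENNReal.natCast_ne_top _
    have hSle : ∑ k ∈ Finset.Icc 1 n,
        ∫⁻ ω in {ω : Ω | (pidx n : ℝ) < |X k ω|}, ENNReal.ofReal |X k ω| ∂P
        ≤ 2 * (((pidx n : ℕ) : ℝ≥0∞) * M' * T (pidx n)) := by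
      calc ∑ k ∈ Finset.Icc 1 n,
            ∫⁻ ω in {ω : Ω | (pidx n : ℝ) < |X k ω|}, ENNReal.ofReal |X k ω| ∂P
          ≤ ∑ k ∈ Finset.Icc 1 n,
              (((pidx n : ℕ) : ℝ≥0∞) * P {ω | (pidx n : ℝ) < |X k ω|}
                + ∑' i : ℕ, P {ω | (pidx n : ℝ) + i < |X k ω|}) :=
            Finset.sum_le_sum fun k _ => trunc_bound P (X k) (hX k) (pidx n)
        _ = ((pidx n : ℕ) : ℝ≥0∞) * ∑ k ∈ Finset.Icc 1 n, P {ω | (pidx n : ℝ) < |X k ω|}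
              + ∑' i : ℕ, ∑ k ∈ Finset.Icc 1 n, P {ω | (pidx n : ℝ) + i < |X k ω|} := by
            rw [Finset.sum_add_distrib, ← Finset.mul_sum,
              Summable.tsum_finsetSum (fun k _ => ENNReal.summable)]
        _ ≤ ((pidx n : ℕ) : ℝ≥0∞) *
              (((pidx n : ℕ) : ℝ≥0∞) * M' * P {ω | (pidx n : ℝ) < |Y ω|})
              + ∑' i : ℕ, ((pidx n : ℕ) : ℝ≥0∞) * M' * P {ω | (pidx n : ℝ) + i < |Y ω|} := by
            apply add_le_add
            · exact mul_le_mul_right (hMD _ (by positivity) n) _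
            · exact ENNReal.tsum_le_tsum fun i => hMD _ (by positivity) n
        _ = ((pidx n : ℕ) : ℝ≥0∞) * M' *
              (((pidx n : ℕ) : ℝ≥0∞) * P {ω | (pidx n : ℝ) < |Y ω|})
              + ((pidx n : ℕ) : ℝ≥0∞) * M' *
                ∑' i : ℕ, P {ω | (pidx n : ℝ) + i < |Y ω|} := by
            rw [ENNReal.tsum_mul_left]
            ring
        _ ≤ ((pidx n : ℕ) : ℝ≥0∞) * M' * T (pidx n)
              + ((pidx n : ℕ) : ℝ≥0∞) * M' * T (pidx n) := by
            apply add_le_add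
            · exact mul_le_mul_right (pt_bound P Y hY (pidx n)) _
            · exact mul_le_mul_right (tail_bound P Y hY (pidx n) hN1) _
        _ = 2 * (((pidx n : ℕ) : ℝ≥0∞) * M' * T (pidx n)) := by ring
    have hc : ENNReal.ofReal ((pidx n : ℝ) ^ (-2 : ℝ))
        = (((pidx n : ℕ) : ℝ≥0∞))⁻¹ * (((pidx n : ℕ) : ℝ≥0∞))⁻¹ := by
      have hNR : (0:ℝ) < ((pidx n : ℕ) : ℝ) := by exact_mod_cast pidx_pos n
      rw [Real.rpow_neg hNR.le]
      have h2 : ((pidx n : ℕ) : ℝ) ^ (2:ℝ) = ((pidx n : ℕ) : ℝ) ^ (2:ℕ) := by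
        rw [← Real.rpow_natCast]
        norm_num
      rw [h2, ENNReal.ofReal_inv_of_pos (by positivity), ENNReal.ofReal_pow hNR.le,
        ENNReal.ofReal_natCast, pow_two,
        ENNReal.mul_inv (Or.inl hNne) (Or.inr hNne)]
    calc ENNReal.ofReal ((pidx n : ℝ) ^ (-2 : ℝ)) *
          ∑ k ∈ Finset.Icc 1 n,
            ∫⁻ ω in {ω : Ω | (pidx n : ℝ) < |X k ω|}, ENNReal.ofReal |X k ω| ∂P
        ≤ ((((pidx n : ℕ) : ℝ≥0∞))⁻¹ * (((pidx n : ℕ) : ℝ≥0∞))⁻¹) *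
            (2 * (((pidx n : ℕ) : ℝ≥0∞) * M' * T (pidx n))) := by
          rw [hc]
          exact mul_le_mul_right hSle _
      _ = 2 * M' * ((((pidx n : ℕ) : ℝ≥0∞))⁻¹ * T (pidx n)) *
            ((((pidx n : ℕ) : ℝ≥0∞))⁻¹ * ((pidx n : ℕ) : ℝ≥0∞)) := by ring
      _ = 2 * M' * ((((pidx n : ℕ) : ℝ≥0∞))⁻¹ * T (pidx n)) := by
          rw [ENNReal.inv_mul_cancel hNne hNtop, mul_one]
  -- total bound
  have total : ∑' n : Fin d → ℕ+,
      ENNReal.ofReal ((pidx n : ℝ) ^ (-2 : ℝ)) *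
        ∑ k ∈ Finset.Icc 1 n,
          ∫⁻ ω in {ω : Ω | (pidx n : ℝ) < |X k ω|}, ENNReal.ofReal |X k ω| ∂P
      ≤ 2 * M' * ∑' n : Fin d → ℕ+, (((pidx n : ℕ) : ℝ≥0∞))⁻¹ * T (pidx n) := by
    rw [← ENNReal.tsum_mul_left]
    exact ENNReal.tsum_le_tsum step1
  -- bound the key sum
  have U_bound : ∑' n : Fin d → ℕ+, (((pidx n : ℕ) : ℝ≥0∞))⁻¹ * T (pidx n)
      ≤ ENNReal.ofReal (2 ^ d) *
          ∫⁻ ω, ENNReal.ofReal (|Y ω| * (max 1 (Real.log |Y ω|)) ^ d) ∂P := by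
    have hswap : ∑' n : Fin d → ℕ+, (((pidx n : ℕ) : ℝ≥0∞))⁻¹ * T (pidx n)
        = ∫⁻ ω, ∑' n : Fin d → ℕ+, (((pidx n : ℕ) : ℝ≥0∞))⁻¹ *
            ({ω | ((pidx n : ℕ) : ℝ) < |Y ω|}.indicator fun ω => ENNReal.ofReal |Y ω|) ω ∂P := by
      rw [lintegral_tsum (fun n => ((hYm.indicator (hSY _)).const_mul _).aemeasurable)]
      refine tsum_congr fun n => ?_
      rw [lintegral_const_mul _ (hYm.indicator (hSY _))]
    rw [hswap]
    have hpoint : ∀ ω, ∑' n : Fin d → ℕ+, (((pidx n : ℕ) : ℝ≥0∞))⁻¹ *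
        ({ω | ((pidx n : ℕ) : ℝ) < |Y ω|}.indicator fun ω => ENNReal.ofReal |Y ω|) ω
        ≤ ENNReal.ofReal (2 ^ d) *
            ENNReal.ofReal (|Y ω| * (max 1 (Real.log |Y ω|)) ^ d) := by
      intro ω
      set a := |Y ω| with ha
      have h0 : ∀ n : Fin d → ℕ+,
          (((pidx n : ℕ) : ℝ≥0∞))⁻¹ *
            ({ω | ((pidx n : ℕ) : ℝ) < |Y ω|}.indicator fun ω => ENNReal.ofReal |Y ω|) ω
          = ((((pidx n : ℕ) : ℝ≥0∞))⁻¹ * (if ((pidx n : ℕ) : ℝ) < a then 1 else 0)) *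
              ENNReal.ofReal a := by
        intro n
        rw [Set.indicator_apply]
        have : (ω ∈ {ω | ((pidx n : ℕ) : ℝ) < |Y ω|}) = (((pidx n : ℕ) : ℝ) < a) := by
          simp [ha]
        split
        · rename_i h
          rw [if_pos (by exact h), mul_one]
        · rename_i h
          rw [if_neg (by exact h)]
          simp
      calc ∑' n : Fin d → ℕ+, (((pidx n : ℕ) : ℝ≥0∞))⁻¹ *
            ({ω | ((pidx n : ℕ) : ℝ) < |Y ω|}.indicator fun ω => ENNReal.ofReal |Y ω|) ω
          = (∑' n : Fin d → ℕ+,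
              (((pidx n : ℕ) : ℝ≥0∞))⁻¹ * (if ((pidx n : ℕ) : ℝ) < a then 1 else 0)) *
              ENNReal.ofReal a := by
            rw [← ENNReal.tsum_mul_right]
            exact tsum_congr h0
        _ ≤ ENNReal.ofReal ((2 * max 1 (Real.log a)) ^ d) * ENNReal.ofReal a :=
            mul_le_mul_left (key_bound d a) _
        _ = ENNReal.ofReal (2 ^ d) * ENNReal.ofReal (a * (max 1 (Real.log a)) ^ d) := by
            rw [← ENNReal.ofReal_mul (by positivity), ← ENNReal.ofReal_mul (by positivity)]
            congr 1
            ring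
    calc ∫⁻ ω, ∑' n : Fin d → ℕ+, (((pidx n : ℕ) : ℝ≥0∞))⁻¹ *
          ({ω | ((pidx n : ℕ) : ℝ) < |Y ω|}.indicator fun ω => ENNReal.ofReal |Y ω|) ω ∂P
        ≤ ∫⁻ ω, ENNReal.ofReal (2 ^ d) *
            ENNReal.ofReal (|Y ω| * (max 1 (Real.log |Y ω|)) ^ d) ∂P := lintegral_mono hpoint
      _ = ENNReal.ofReal (2 ^ d) *
            ∫⁻ ω, ENNReal.ofReal (|Y ω| * (max 1 (Real.log |Y ω|)) ^ d) ∂P :=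
          lintegral_const_mul' _ _ ENNReal.ofReal_ne_top
  -- finish
  refine lt_of_le_of_lt total ?_
  refine lt_of_le_of_lt (mul_le_mul_right U_bound _) ?_
  apply ENNReal.mul_lt_top
  · exact ENNReal.mul_lt_top (by simp) ENNReal.ofReal_lt_top
  · exact ENNReal.mul_lt_top ENNReal.ofReal_lt_top hmom
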